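/- arXiv:1902.05719 — 4 statements merged into one kernel-verified Lean document; each statement's English description precedes it below -/
import Mathlib

section
/- Let n and k be positive integers, and consider the action of permutations on the set Δ^k where Δ is a set of size n. Let H be a cyclic subgroup of Sym(Δ^k) that is semiregular and such that every element g of H acts coordinatewise, i.e., there exist permutations g_1, …, g_k of Δ with g(δ_1, …, δ_k) = (g_1(δ_1), …, g_k(δ_k)) for all (δ_1, …, δ_k) ∈ Δ^k. Then the order of H divides n. -/
lemma aux_pow_coord {Δ : Type*} {k : ℕ} (σ : Equiv.Perm (Fin k → Δ))
    (gs : Fin k → Equiv.Perm Δ) (h : ∀ x : Fin k → Δ, σ x = fun i => gs i (x i)) (j : ℕ) :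
    ∀ x : Fin k → Δ, (σ ^ j) x = fun i => (gs i ^ j) (x i) := by
  induction j with
  | zero => intro x; simp
  | succ j ih =>
    intro x
    rw [pow_succ', Equiv.Perm.mul_apply, ih, h]
    funext i
    rw [pow_succ', Equiv.Perm.mul_apply]

lemma aux_lcm_ne_zero {ι : Type*} (s : Finset ι) (f : ι → ℕ)
    (hf : ∀ i ∈ s, f i ≠ 0) : s.lcm f ≠ 0 := by
  classical
  induction s using Finset.induction with
  | empty => simp
  | @insert i s hnot ih =>
    rw [Finset.lcm_insert]
    have := Nat.lcm_ne_zero (hf i (Finset.mem_insert_self i s))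
      (ih fun j hj => hf j (Finset.mem_insert_of_mem hj))
    exact this

lemma aux_pp_dvd_lcm {p a x y : ℕ} (hp : p.Prime) (hx : x ≠ 0) (hy : y ≠ 0)
    (h : p ^ a ∣ Nat.lcm x y) : p ^ a ∣ x ∨ p ^ a ∣ y := by
  rw [Nat.Prime.pow_dvd_iff_le_factorization hp (Nat.lcm_ne_zero hx hy),
    Nat.factorization_lcm hx hy, Finsupp.sup_apply, le_sup_iff] at h
  rcases h with h | h
  · exact Or.inl ((Nat.Prime.pow_dvd_iff_le_factorization hp hx).mpr h)
  · exact Or.inr ((Nat.Prime.pow_dvd_iff_le_factorization hp hy).mpr h)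

lemma aux_lcm_pp {ι : Type*} {p a : ℕ} (hp : p.Prime) (ha : 0 < a) (s : Finset ι) (f : ι → ℕ)
    (hf : ∀ i ∈ s, f i ≠ 0) (h : p ^ a ∣ s.lcm f) : ∃ i ∈ s, p ^ a ∣ f i := by
  classical
  induction s using Finset.induction with
  | empty =>
    simp only [Finset.lcm_empty, Nat.dvd_one] at h
    exact absurd h (Nat.one_lt_pow ha.ne' hp.one_lt).ne'
  | @insert i s hnot ih =>
    rw [Finset.lcm_insert] at h
    have hx : f i ≠ 0 := hf i (Finset.mem_insert_self i s)
    have hf' : ∀ j ∈ s, f j ≠ 0 := fun j hj => hf j (Finset.mem_insert_of_mem hj)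
    rcases aux_pp_dvd_lcm hp hx (aux_lcm_ne_zero s f hf') h with h | h
    · exact ⟨i, Finset.mem_insert_self i s, h⟩
    · obtain ⟨j, hj, hd⟩ := ih hf' h
      exact ⟨j, Finset.mem_insert_of_mem hj, hd⟩

open MulAction

lemma aux_dvd_card {Δ : Type*} [Fintype Δ] (σ : Equiv.Perm Δ) (d : ℕ)
    (h : ∀ δ : Δ, d ∣ Function.minimalPeriod σ δ) : d ∣ Fintype.card Δ := by
  classical
  have h1 : ∀ b : Δ, Nat.card (orbit (Subgroup.zpowers σ) b)
      = Function.minimalPeriod (σ • ·) b := fun b => by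
    letI : Fintype (orbit (Subgroup.zpowers σ) b) := Fintype.ofFinite _
    rw [Nat.card_eq_fintype_card, ← MulAction.minimalPeriod_eq_card]
  have e := MulAction.selfEquivSigmaOrbits (Subgroup.zpowers σ) Δ
  rw [Fintype.card_congr e, Fintype.card_sigma]
  refine Finset.dvd_sum fun ω _ => ?_
  rw [← Nat.card_eq_fintype_card, h1]
  exact h _

/-- Let `Δ` have size `n`, `k ≥ 1`, and let `H` be a semiregular cyclic
subgroup of `Sym(Δ^k)` all of whose elements act coordinatewise. Then `|H|` divides `n`. -/
theorem stmt_1 {Δ : Type*} [Fintype Δ] (n k : ℕ) (hn : Fintype.card Δ = n) (hk : 0 < k)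
    (H : Subgroup (Equiv.Perm (Fin k → Δ)))
    (hcyc : IsCyclic H)
    (hsemi : ∀ h ∈ H, ∀ x : Fin k → Δ, h x = x → h = 1)
    (hcoord : ∀ g ∈ H, ∃ gs : Fin k → Equiv.Perm Δ,
      ∀ x : Fin k → Δ, g x = fun i => gs i (x i)) :
    Nat.card H ∣ n := by
  classical
  obtain ⟨g, hgen⟩ := hcyc
  set σ : Equiv.Perm (Fin k → Δ) := (g : Equiv.Perm (Fin k → Δ)) with hσ
  obtain ⟨gs, hgs⟩ := hcoord σ g.2
  set m := Nat.card H with hmdef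
  have hgen' : ∀ y : H, y ∈ Subgroup.zpowers g := fun y => by
    obtain ⟨j, hj⟩ := hgen y
    exact ⟨j, hj⟩
  have hm : orderOf σ = m := by
    rw [hσ, Subgroup.orderOf_coe, orderOf_eq_card_of_forall_mem_zpowers hgen', hmdef]
  -- positivity of minimal periods
  have hpos : ∀ (τ : Equiv.Perm Δ) (δ : Δ), 0 < Function.minimalPeriod τ δ := by
    intro τ δ
    apply Function.IsPeriodicPt.minimalPeriod_pos (orderOf_pos τ)
    show (⇑τ)^[orderOf τ] δ = δ
    rw [Equiv.Perm.iterate_eq_pow, pow_orderOf_eq_one]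
    rfl
  rcases Nat.eq_zero_or_pos n with rfl | hnpos
  · exact dvd_zero _
  have hm0 : m ≠ 0 := Nat.card_pos.ne'
  rw [← Nat.factorization_le_iff_dvd hm0 hnpos.ne', Finsupp.le_def]
  intro p
  by_cases hp : p.Prime
  · set a := m.factorization p with hadef
    rcases Nat.eq_zero_or_pos a with ha | ha
    · simp [← hadef, ha]
    -- key claim: some coordinate has all minimal periods divisible by p^a
    have hkey : ∃ i : Fin k, ∀ δ : Δ, p ^ a ∣ Function.minimalPeriod (gs i) δ := by
      by_contra hcon
      push_neg at hcon
      choose x hx using hcon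
      set L := Finset.univ.lcm (fun i : Fin k => Function.minimalPeriod (gs i) (x i)) with hL
      have hfix : (σ ^ L) x = x := by
        rw [aux_pow_coord σ gs hgs L x]
        funext i
        have hdvd : Function.minimalPeriod (gs i) (x i) ∣ L :=
          Finset.dvd_lcm (Finset.mem_univ i)
        obtain ⟨c, hc⟩ := hdvd
        have : ((gs i : Equiv.Perm Δ) : Δ → Δ)^[L] (x i) = x i := by
          rw [hc]
          exact (Function.isPeriodicPt_minimalPeriod (gs i) (x i)).mul_const c
        rwa [Equiv.Perm.iterate_eq_pow] at this
      have hLm : m ∣ L := by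
        rw [← hm]
        apply orderOf_dvd_of_pow_eq_one
        exact hsemi (σ ^ L) (H.pow_mem g.2 L) x hfix
      have hpa : p ^ a ∣ L := dvd_trans (Nat.ordProj_dvd m p) hLm
      obtain ⟨i, _, hdi⟩ := aux_lcm_pp hp ha Finset.univ
        (fun i : Fin k => Function.minimalPeriod (gs i) (x i))
        (fun i _ => (hpos (gs i) (x i)).ne') hpa
      exact hx i hdi
    obtain ⟨i, hi⟩ := hkey
    have : p ^ a ∣ n := hn ▸ aux_dvd_card (gs i) (p ^ a) (hi)
    exact (Nat.Prime.pow_dvd_iff_le_factorization hp hnpos.ne').mp this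
  · simp [Nat.factorization_eq_zero_of_not_prime m hp]
end

section
/- Let p be a prime, let H be a finite group, and let k ≥ 2 be an integer. Then every metacyclic p-subgroup of the direct power H^k is isomorphic to a subgroup of H^2 = H × H. -/
/-- A finite group is metacyclic if it has a cyclic normal subgroup with cyclic quotient. -/
def IsMetacyclic (G : Type*) [Group G] : Prop :=
  ∃ N : Subgroup G, ∃ _ : N.Normal, IsCyclic N ∧ IsCyclic (G ⧸ N)

open Subgroup MulAction

/-- The subgroup of central elements of exponent dividing `p`. -/
def OmegaP (p : ℕ) (G : Type*) [Group G] : Subgroup G where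
  carrier := {x | x ∈ Subgroup.center G ∧ x ^ p = 1}
  one_mem' := ⟨Subgroup.one_mem _, one_pow p⟩
  mul_mem' := fun {a b} ha hb => ⟨mul_mem ha.1 hb.1, by
    have hc : Commute a b := ((Subgroup.mem_center_iff.mp ha.1) b).symm
    rw [hc.mul_pow, ha.2, hb.2, one_mul]⟩
  inv_mem' := fun {a} ha => ⟨inv_mem ha.1, by rw [inv_pow, ha.2, inv_one]⟩

lemma mem_OmegaP {p : ℕ} {G : Type*} [Group G] {x : G} :
    x ∈ OmegaP p G ↔ x ∈ Subgroup.center G ∧ x ^ p = 1 := Iff.rfl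

/-- A nontrivial normal subgroup of a finite `p`-group contains a nontrivial central element. -/
lemma aux_central {p : ℕ} (hp : p.Prime) {G : Type*} [Group G] [Finite G]
    (hpg : IsPGroup p G) {N : Subgroup G} (hNn : N.Normal) (hbot : N ≠ ⊥) :
    ∃ z : G, z ∈ N ∧ z ∈ Subgroup.center G ∧ z ≠ 1 := by
  haveI : Fact p.Prime := ⟨hp⟩
  haveI := hNn
  letI : MulAction G ↥N := MulAction.compHom ↥N (MulAut.conjNormal (H := N))
  have hsmul : ∀ (g : G) (n : ↥N), ((g • n : ↥N) : G) = g * n * g⁻¹ := fun g n => rfl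
  have h1 : (1 : ↥N) ∈ fixedPoints G ↥N := by
    intro g
    apply Subtype.ext
    rw [hsmul]
    simp
  have hdvd : p ∣ Nat.card ↥N := by
    haveI : Nontrivial ↥N := (Subgroup.nontrivial_iff_ne_bot N).mpr hbot
    obtain ⟨n, hn0, hn⟩ := (hpg.to_subgroup N).nontrivial_iff_card.mp inferInstance
    exact hn ▸ dvd_pow_self p hn0.ne'
  obtain ⟨b, hb, hne⟩ :=
    hpg.exists_fixed_point_of_prime_dvd_card_of_fixed_point (α := ↥N) hdvd h1
  refine ⟨(b : G), b.2, Subgroup.mem_center_iff.mpr fun g => ?_, fun h => hne (Subtype.ext h.symm)⟩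
  · have := hb g
    have h2 : g * (b : G) * g⁻¹ = b := by rw [← hsmul g b, this]
    calc g * (b : G) = (g * b * g⁻¹) * g := by group
    _ = (b : G) * g := by rw [h2]

/-- In a `p`-group, every nontrivial element has a power of order exactly `p`. -/
lemma aux_orderp {p : ℕ} (hp : p.Prime) {G : Type*} [Group G] (hpg : IsPGroup p G)
    {z : G} (hz : z ≠ 1) : ∃ y : G, y ∈ Subgroup.zpowers z ∧ orderOf y = p := by
  obtain ⟨k, hk⟩ := hpg z
  have hdvd : orderOf z ∣ p ^ k := orderOf_dvd_of_pow_eq_one hk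
  obtain ⟨m, hm, hord⟩ := (Nat.dvd_prime_pow hp).mp hdvd
  have hm0 : m ≠ 0 := by
    rintro rfl
    rw [pow_zero] at hord
    exact hz (orderOf_eq_one_iff.mp hord)
  refine ⟨z ^ p ^ (m - 1), Subgroup.pow_mem _ (Subgroup.mem_zpowers z) _, ?_⟩
  have hp0 : 0 < p := hp.pos
  have hne : p ^ (m - 1) ≠ 0 := pow_ne_zero _ hp0.ne'
  rw [orderOf_pow' z hne, hord, Nat.gcd_eq_right (pow_dvd_pow p (Nat.sub_le m 1)),
    Nat.pow_div (Nat.sub_le m 1) hp0]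
  have hm1 : m - (m - 1) = 1 := by omega
  rw [hm1, pow_one]

/-- A cyclic group of exponent dividing `p` has order dividing `p`. -/
lemma aux_cyclic_card {p : ℕ} {K : Type*} [Group K] [IsCyclic K]
    (h : ∀ x : K, x ^ p = 1) : Nat.card K ∣ p := by
  obtain ⟨g, hg⟩ := IsCyclic.exists_generator (α := K)
  rw [← orderOf_eq_card_of_forall_mem_zpowers hg]
  exact orderOf_dvd_of_pow_eq_one (h g)

lemma aux_isCyclic_of_injective {K C : Type*} [Group K] [Group C] [IsCyclic C]
    (f : K →* C) (hf : Function.Injective f) : IsCyclic K := by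
  have e : K ≃* f.range := MonoidHom.ofInjective hf
  exact isCyclic_of_surjective e.symm e.symm.surjective

/-- `OmegaP p G` of a metacyclic group has order dividing `p ^ 2`. -/
lemma aux_card_omega {p : ℕ} (hp : p.Prime) {G : Type*} [Group G] [Finite G]
    (hmc : IsMetacyclic G) : Nat.card (OmegaP p G) ∣ p ^ 2 := by
  obtain ⟨N, hNn, hNc, hQc⟩ := hmc
  haveI := hNn
  haveI := hNc
  haveI := hQc
  set Ω := OmegaP p G
  set g : ↥Ω →* G ⧸ N := (QuotientGroup.mk' N).comp Ω.subtype with hg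
  have hcard : Nat.card ↥Ω = Nat.card (↥Ω ⧸ g.ker) * Nat.card g.ker :=
    Subgroup.card_eq_card_quotient_mul_card_subgroup g.ker
  have hrange : Nat.card (↥Ω ⧸ g.ker) = Nat.card g.range :=
    Nat.card_congr (QuotientGroup.quotientKerEquivRange g).toEquiv
  have h1 : Nat.card g.range ∣ p := by
    apply aux_cyclic_card
    rintro ⟨v, w, rfl⟩
    apply Subtype.ext
    show (g w) ^ p = 1
    rw [← map_pow]
    have : (w : G) ^ p = 1 := w.2.2
    have hw : w ^ p = 1 := Subtype.ext this
    rw [hw, map_one]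
  have h2 : Nat.card g.ker ∣ p := by
    set f : ↥g.ker →* ↥N := MonoidHom.codRestrict (Ω.subtype.comp g.ker.subtype) N (by
      rintro ⟨w, hw⟩
      have : g w = 1 := hw
      rwa [hg, MonoidHom.comp_apply, ← MonoidHom.mem_ker, QuotientGroup.ker_mk'] at this)
    have hfinj : Function.Injective f := by
      intro a b hab
      apply Subtype.ext
      apply Subtype.ext
      have := congrArg (Subtype.val) hab
      exact this
    haveI : IsCyclic ↥g.ker := aux_isCyclic_of_injective f hfinj
    apply aux_cyclic_card
    intro x
    apply Subtype.ext
    apply Subtype.ext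
    show (((x : ↥Ω) : G)) ^ p = 1
    exact (x : ↥Ω).2.2
  calc Nat.card ↥Ω = Nat.card g.range * Nat.card g.ker := by rw [hcard, hrange]
  _ ∣ p * p := mul_dvd_mul h1 h2
  _ = p ^ 2 := (sq p).symm

/-- Key lemma: in a finite metacyclic `p`-group, any family of normal subgroups with
trivial intersection contains two members with trivial intersection. -/
lemma aux_key {p : ℕ} (hp : p.Prime) {G : Type*} [Group G] [Finite G]
    (hpg : IsPGroup p G) (hmc : IsMetacyclic G)
    {ι : Type*} [Nonempty ι] (K : ι → Subgroup G) (hn : ∀ i, (K i).Normal)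
    (hinf : (⨅ i, K i) = ⊥) : ∃ i j, K i ⊓ K j = ⊥ := by
  by_cases hbot : ∃ i, K i = ⊥
  · obtain ⟨i, hi⟩ := hbot
    exact ⟨i, i, by rw [hi, inf_bot_eq]⟩
  push_neg at hbot
  set Ω := OmegaP p G with hΩdef
  have hzed : ∀ (N : Subgroup G), N.Normal → N ≠ ⊥ →
      ∃ z : G, z ∈ N ⊓ Ω ∧ orderOf z = p := by
    intro N hNn hNb
    obtain ⟨z0, hz0N, hz0c, hz0ne⟩ := aux_central hp hpg hNn hNb
    obtain ⟨y, hy, hyp⟩ := aux_orderp hp hpg hz0ne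
    have hyN : y ∈ N := (Subgroup.zpowers_le.mpr hz0N) hy
    have hyc : y ∈ Subgroup.center G := (Subgroup.zpowers_le.mpr hz0c) hy
    refine ⟨y, ⟨hyN, mem_OmegaP.mpr ⟨hyc, ?_⟩⟩, hyp⟩
    rw [← hyp]; exact pow_orderOf_eq_one y
  have hT : ∀ i, ∃ z, z ∈ K i ⊓ Ω ∧ orderOf z = p := fun i => hzed _ (hn i) (hbot i)
  have hTinf : (⨅ i, K i ⊓ Ω) = ⊥ := by
    apply le_bot_iff.mp
    calc (⨅ i, K i ⊓ Ω) ≤ ⨅ i, K i := le_iInf fun i => (iInf_le _ i).trans inf_le_left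
    _ = ⊥ := hinf
  have hcardΩ : Nat.card Ω ∣ p ^ 2 := aux_card_omega hp hmc
  have hex : ∃ i, ¬ Ω ≤ K i := by
    by_contra h
    push_neg at h
    obtain ⟨z, hz, hzp⟩ := hT (Classical.arbitrary ι)
    have hzb : z ∈ (⨅ i, K i ⊓ Ω) := Subgroup.mem_iInf.mpr fun i => ⟨h i hz.2, hz.2⟩
    rw [hTinf, Subgroup.mem_bot] at hzb
    rw [hzb, orderOf_one] at hzp
    exact hp.one_lt.ne' hzp.symm
  obtain ⟨i, hi⟩ := hex
  obtain ⟨z, hz, hzp⟩ := hT i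
  set T := K i ⊓ Ω with hTdef
  have h2 : Nat.card T ∣ p ^ 2 := (Subgroup.card_dvd_of_le inf_le_right).trans hcardΩ
  have hTne : Nat.card T ≠ p ^ 2 := by
    intro hc
    have hle : Nat.card Ω ≤ Nat.card T :=
      hc ▸ Nat.le_of_dvd (pow_pos hp.pos 2) hcardΩ
    have heq : T = Ω := Subgroup.eq_of_le_of_card_ge inf_le_right hle
    exact hi (heq ▸ inf_le_left)
  have h1 : p ∣ Nat.card T := by
    have hle : Subgroup.zpowers z ≤ T := Subgroup.zpowers_le.mpr hz
    have := Subgroup.card_dvd_of_le hle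
    rwa [Nat.card_zpowers, hzp] at this
  have hcardT : Nat.card T = p := by
    obtain ⟨a, ha2, hae⟩ := (Nat.dvd_prime_pow hp).mp h2
    interval_cases a
    · rw [pow_zero] at hae
      rw [hae] at h1
      have := Nat.le_of_dvd one_pos h1
      have := hp.two_le
      omega
    · rw [hae, pow_one]
    · exact absurd hae hTne
  have hTz : Subgroup.zpowers z = T :=
    Subgroup.eq_of_le_of_card_ge (Subgroup.zpowers_le.mpr hz)
      (by rw [Nat.card_zpowers, hzp, hcardT])
  have hexj : ∃ j, z ∉ K j ⊓ Ω := by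
    by_contra h
    push_neg at h
    have : z ∈ (⨅ j, K j ⊓ Ω) := Subgroup.mem_iInf.mpr h
    rw [hTinf, Subgroup.mem_bot] at this
    rw [this, orderOf_one] at hzp
    exact hp.one_lt.ne' hzp.symm
  obtain ⟨j, hj⟩ := hexj
  refine ⟨i, j, ?_⟩
  by_contra hne
  haveI hnij : (K i ⊓ K j).Normal :=
    ⟨fun x hx g => ⟨(hn i).conj_mem x hx.1 g, (hn j).conj_mem x hx.2 g⟩⟩
  obtain ⟨w, hw, hwp⟩ := hzed (K i ⊓ K j) hnij hne
  have hwT : w ∈ T := ⟨hw.1.1, hw.2⟩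
  have hwz : Subgroup.zpowers w = T :=
    Subgroup.eq_of_le_of_card_ge (Subgroup.zpowers_le.mpr hwT)
      (by rw [Nat.card_zpowers, hwp, hcardT])
  have hzw : z ∈ Subgroup.zpowers w := by rw [hwz, ← hTz]; exact Subgroup.mem_zpowers z
  exact hj (Subgroup.zpowers_le.mpr (show w ∈ K j ⊓ Ω from ⟨hw.1.2, hw.2⟩) hzw)

/-- Every metacyclic `p`-subgroup of a direct power `H^k` (`k ≥ 2`) is
isomorphic to a subgroup of `H × H`. -/
theorem stmt_2 (p : ℕ) (hp : p.Prime) (H : Type*) [Group H] [Fintype H]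
    (k : ℕ) (hk : 2 ≤ k) (P : Subgroup (Fin k → H))
    (hmc : IsMetacyclic P) (hpg : IsPGroup p P) :
    ∃ Q : Subgroup (H × H), Nonempty (P ≃* Q) := by
  haveI : Nonempty (Fin k) := ⟨⟨0, by omega⟩⟩
  set π : Fin k → (↥P →* H) :=
    fun i => (Pi.evalMonoidHom (fun _ => H) i).comp P.subtype with hπ
  have hinf : (⨅ i, (π i).ker) = ⊥ := by
    rw [eq_bot_iff]
    intro g hg
    have h : ∀ i, π i g = 1 := fun i => Subgroup.mem_iInf.mp hg i
    rw [Subgroup.mem_bot]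
    apply Subtype.ext
    funext i
    exact h i
  obtain ⟨i, j, hij⟩ := aux_key hp hpg hmc (fun i => (π i).ker)
    (fun i => MonoidHom.normal_ker _) hinf
  set φ : ↥P →* H × H := (π i).prod (π j) with hφ
  have hker : φ.ker = ⊥ := by rw [hφ, MonoidHom.ker_prod]; exact hij
  have hinj : Function.Injective φ := (MonoidHom.ker_eq_bot_iff φ).mp hker
  exact ⟨φ.range, ⟨MonoidHom.ofInjective hinj⟩⟩
end

section
/- Let G be a finite group, let A and B be subgroups of G, and let L be a normal subgroup of G. If G = AB (every element of G is a product of an element of A and an element of B), then |A ∩ L| · |B ∩ L| · |G/L| is divisible by |L|. -/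
/-- If every element of `G` can be written as `b * a` with `b ∈ B`, `a ∈ A`, then the index
of `A` equals its relative index in `B`. -/
lemma index_eq_relindex_aux {G : Type*} [Group G] (A B : Subgroup G)
    (h : ∀ g : G, ∃ b ∈ B, ∃ a ∈ A, g = b * a) : A.index = A.relIndex B := by
  unfold Subgroup.index Subgroup.relIndex Subgroup.index
  refine (Nat.card_eq_of_bijective
    (fun x => Quotient.map' (fun b : B => (b : G))
      (fun b c hbc => by
        rw [QuotientGroup.leftRel_apply] at hbc ⊢
        exact hbc) x) ⟨?_, ?_⟩).symm
  · intro x y hxy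
    induction x using Quotient.inductionOn'
    induction y using Quotient.inductionOn'
    rename_i b c
    refine Quotient.sound' ?_
    rw [QuotientGroup.leftRel_apply]
    have := Quotient.exact' hxy
    rw [QuotientGroup.leftRel_apply] at this
    exact this
  · intro x
    induction x using Quotient.inductionOn'
    rename_i g
    obtain ⟨b, hb, a, ha, rfl⟩ := h g
    refine ⟨Quotient.mk'' ⟨b, hb⟩, ?_⟩
    refine Quotient.sound' ?_
    rw [QuotientGroup.leftRel_apply]
    simpa using ha

lemma card_eq_card_inf_mul_relindex {G : Type*} [Group G] (A L : Subgroup G) :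
    Nat.card A = Nat.card ↥(A ⊓ L) * L.relIndex A := by
  have h1 : Nat.card (L.subgroupOf A) * (L.subgroupOf A).index = Nat.card A :=
    Subgroup.card_mul_index _
  have h2 : Nat.card (L.subgroupOf A) = Nat.card ↥(A ⊓ L) := by
    rw [← Subgroup.inf_subgroupOf_right L A, inf_comm L A]
    exact Nat.card_congr (Subgroup.subgroupOfEquivOfLe inf_le_left).toEquiv
  rw [← h1, h2]
  rfl

/-- If `G = AB` for subgroups `A, B` of a finite group `G` and `L` is a
normal subgroup of `G`, then `|L|` divides `|A ∩ L| ⬝ |B ∩ L| ⬝ |G/L|`. -/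
theorem stmt_5 {G : Type*} [Group G] [Fintype G] (A B L : Subgroup G) (hL : L.Normal)
    (hAB : ∀ g : G, ∃ a ∈ A, ∃ b ∈ B, g = a * b) :
    Nat.card L ∣ Nat.card ↥(A ⊓ L) * Nat.card ↥(B ⊓ L) * L.index := by
  haveI := hL
  -- G = BA as well
  have hBA : ∀ g : G, ∃ b ∈ B, ∃ a ∈ A, g = b * a := by
    intro g
    obtain ⟨a, ha, b, hb, hab⟩ := hAB g⁻¹
    exact ⟨b⁻¹, B.inv_mem hb, a⁻¹, A.inv_mem ha, by rw [← mul_inv_rev, ← hab, inv_inv]⟩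
  have hGA : A.index = A.relIndex B := index_eq_relindex_aux A B hBA
  -- |G| ∣ |A| * |B|
  have h4 : Nat.card G ∣ Nat.card A * Nat.card B := by
    have : A.index ∣ Nat.card B := by
      rw [hGA]
      exact Subgroup.index_dvd_card (A.subgroupOf B)
    calc Nat.card G = Nat.card A * A.index := (Subgroup.card_mul_index A).symm
      _ ∣ Nat.card A * Nat.card B := mul_dvd_mul_left _ this
  -- |A| ∣ |A ⊓ L| * [G:L], similarly for B
  have h2 : Nat.card A ∣ Nat.card ↥(A ⊓ L) * L.index := by
    rw [card_eq_card_inf_mul_relindex A L]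
    exact mul_dvd_mul_left _ (Subgroup.relIndex_dvd_index_of_normal L A)
  have h3 : Nat.card B ∣ Nat.card ↥(B ⊓ L) * L.index := by
    rw [card_eq_card_inf_mul_relindex B L]
    exact mul_dvd_mul_left _ (Subgroup.relIndex_dvd_index_of_normal L B)
  have h1 : Nat.card L * L.index = Nat.card G := Subgroup.card_mul_index L
  have hn : 0 < L.index := Nat.pos_of_ne_zero (Subgroup.index_ne_zero_of_finite)
  have key : Nat.card L * L.index ∣
      (Nat.card ↥(A ⊓ L) * Nat.card ↥(B ⊓ L) * L.index) * L.index := by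
    rw [h1]
    calc Nat.card G ∣ Nat.card A * Nat.card B := h4
      _ ∣ (Nat.card ↥(A ⊓ L) * L.index) * (Nat.card ↥(B ⊓ L) * L.index) := mul_dvd_mul h2 h3
      _ = (Nat.card ↥(A ⊓ L) * Nat.card ↥(B ⊓ L) * L.index) * L.index := by ring
  exact (Nat.mul_dvd_mul_iff_right hn).mp key
end

section
/- Let p be a prime and n a positive integer, and let R be a metacyclic subgroup of GL_{n+1}(F_p) whose order is divisible by p^n. Then ⌈n/2⌉ ≤ ⌈log_p(n+1)⌉, where ⌈log_p(n+1)⌉ is the least nonnegative integer c with p^c ≥ n+1. -/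
open Polynomial in
/-- Any element of `p`-power order `p ^ m` in `GL_{n+1}(F_p)` satisfies `m ≤ c`
whenever `p ^ c ≥ n + 1`. -/
lemma aux_order_le (p n c : ℕ) [Fact p.Prime] (hc : n + 1 ≤ p ^ c)
    (g : Matrix.GeneralLinearGroup (Fin (n + 1)) (ZMod p)) (m : ℕ)
    (hg : orderOf g = p ^ m) : m ≤ c := by
  have hp : p.Prime := Fact.out
  set M : Matrix (Fin (n + 1)) (Fin (n + 1)) (ZMod p) := g.val with hMdef
  have hM : M ^ p ^ m = 1 := by
    have h1 : g ^ p ^ m = 1 := by rw [← hg]; exact pow_orderOf_eq_one g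
    have := congrArg Units.val h1
    simpa [Units.val_pow_eq_pow_val] using this
  have hnil : IsNilpotent (M - 1) :=
    ⟨p ^ m, by
      rw [sub_pow_char_pow_of_commute p m (Commute.one_right M), hM, one_pow,
        sub_self]⟩
  -- nilpotent matrix of size n+1 satisfies (M-1)^(n+1) = 0
  have hchar : (M - 1).charpoly = X ^ (n + 1) := by
    have h2 := Matrix.isNilpotent_charpoly_sub_pow_of_isNilpotent hnil
    have h3 := h2.eq_zero
    rw [sub_eq_zero] at h3
    simpa using h3
  have hpow : (M - 1) ^ (n + 1) = 0 := by
    have := Matrix.aeval_self_charpoly (M - 1)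
    rwa [hchar, map_pow, aeval_X] at this
  have hMc : M ^ p ^ c = 1 := by
    have h4 : (M - 1) ^ p ^ c = 0 := by
      calc (M - 1) ^ p ^ c = (M - 1) ^ (n + 1) * (M - 1) ^ (p ^ c - (n + 1)) := by
            rw [← pow_add, Nat.add_sub_cancel' hc]
        _ = 0 := by rw [hpow, zero_mul]
    have h5 : M ^ p ^ c - 1 = 0 := by
      have := sub_pow_char_pow_of_commute p c (Commute.one_right M)
      rw [one_pow] at this
      rw [← this, h4]
    have := sub_eq_zero.mp h5
    simpa using this
  have hgc : g ^ p ^ c = 1 := by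
    apply Units.ext
    simpa [Units.val_pow_eq_pow_val] using hMc
  have hdvd : p ^ m ∣ p ^ c := hg ▸ orderOf_dvd_of_pow_eq_one hgc
  exact (Nat.pow_dvd_pow_iff_le_right hp.one_lt).mp hdvd

/-- If a metacyclic subgroup of `GL_{n+1}(F_p)` has order divisible by `p^n`,
then `⌈n/2⌉ ≤ ⌈log_p (n+1)⌉`, the latter being the least `c` with `p^c ≥ n + 1`. -/
theorem stmt_8 (p n : ℕ) [Fact p.Prime] (hn : 0 < n)
    (R : Subgroup (Matrix.GeneralLinearGroup (Fin (n + 1)) (ZMod p)))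
    (hmc : IsMetacyclic R) (hdvd : p ^ n ∣ Nat.card R)
    (c : ℕ) (hc : n + 1 ≤ p ^ c) (hcmin : ∀ c' : ℕ, n + 1 ≤ p ^ c' → c ≤ c') :
    (n + 1) / 2 ≤ c := by
  have hp : p.Prime := Fact.out
  obtain ⟨N, hNnorm, hNcyc, hQcyc⟩ := hmc
  have hRfin : Finite R := inferInstance
  have hRcard : Nat.card R ≠ 0 := Nat.card_pos.ne'
  set a : ℕ := (Nat.card N).factorization p with ha
  set b : ℕ := (Nat.card (R ⧸ N)).factorization p with hb
  have hNcard : Nat.card N ≠ 0 := Nat.card_pos.ne'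
  have hQcard : Nat.card (R ⧸ N) ≠ 0 := Nat.card_pos.ne'
  have hmul : Nat.card R = Nat.card (R ⧸ N) * Nat.card N :=
    Subgroup.card_eq_card_quotient_mul_card_subgroup N
  have hn_le : n ≤ a + b := by
    have : n ≤ (Nat.card R).factorization p :=
      (Nat.Prime.pow_dvd_iff_le_factorization hp hRcard).mp hdvd
    rwa [hmul, Nat.factorization_mul hQcard hNcard, Finsupp.add_apply, add_comm] at this
  -- In each case produce an element of GL of order p^m with m ≥ (n+1)/2.
  have key : ∀ m : ℕ, (∃ g : Matrix.GeneralLinearGroup (Fin (n + 1)) (ZMod p),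
      orderOf g = p ^ m) → (n + 1) / 2 ≤ m → (n + 1) / 2 ≤ c := by
    rintro m ⟨g, hg⟩ hm
    exact hm.trans (aux_order_le p n c hc g m hg)
  rcases le_total a b with hab | hab
  · -- use the quotient: b ≥ (n+1)/2
    have hbm : (n + 1) / 2 ≤ b := by omega
    obtain ⟨q, hq⟩ := hQcyc.exists_ofOrder_eq_natCard
    obtain ⟨r, hr⟩ := QuotientGroup.mk'_surjective N q
    have hdvd1 : p ^ b ∣ orderOf r := by
      have h1 : orderOf q ∣ orderOf r := hr ▸ orderOf_map_dvd (QuotientGroup.mk' N) r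
      exact dvd_trans (hq ▸ Nat.ordProj_dvd _ p) h1
    have hro : orderOf r ≠ 0 := (orderOf_pos r).ne'
    set s : R := r ^ (orderOf r / p ^ b) with hs
    have hso : orderOf s = p ^ b := orderOf_pow_orderOf_div hro hdvd1
    refine key b ⟨(s : Matrix.GeneralLinearGroup (Fin (n + 1)) (ZMod p)), ?_⟩ hbm
    rw [orderOf_submonoid s, hso]
  · -- use the subgroup: a ≥ (n+1)/2
    have ham : (n + 1) / 2 ≤ a := by omega
    obtain ⟨x, hx⟩ := hNcyc.exists_ofOrder_eq_natCard
    have hdvd1 : p ^ a ∣ orderOf x := hx ▸ Nat.ordProj_dvd _ p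
    have hxo : orderOf x ≠ 0 := (orderOf_pos x).ne'
    set y : N := x ^ (orderOf x / p ^ a) with hy
    have hyo : orderOf y = p ^ a := orderOf_pow_orderOf_div hxo hdvd1
    refine key a ⟨(((y : R) : Matrix.GeneralLinearGroup (Fin (n + 1)) (ZMod p))), ?_⟩ ham
    rw [orderOf_submonoid (y : R), orderOf_submonoid y, hyo]
end
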